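/- Input items consumed by the enforcement mechanisms (Proposition 1): in every reachable configuration of the enforcement mechanisms for NI, RI and DI, (i) MAP consumes a low input item from the global input queue only upon a low-channel request from the low execution, and the low execution receives the default value for every high input item and the real value for every low input item; (ii) in the mechanisms for NI and DI, MAP consumes a high input item from the global input queue only upon a high-channel request from the high execution; (iii) in the mechanism for RI, MAP consumes a high input item from the global input queue upon a high-channel request from any local execution; and (iv) the high execution receives real values for both low and high input items. -/

import Mathlib

namespace MapReduce

/-- Security levels: high (`H`) and low (`L`). -/
inductive SecLevel
  | H | L
deriving DecidableEq

/-- Channels (input/output channels, identified by names). -/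
abbrev Chan := String

/-- Values: booleans and non-negative integers. -/
inductive Val
  | bool (b : Bool)
  | nat (n : ℕ)
deriving DecidableEq

/-- An input/output vector, defined (≠ ⊥) on exactly one channel. -/
structure Vec where
  ch : Chan
  val : Val
deriving DecidableEq

/-- Queues of vectors. -/
abbrev Queue := List Vec

/-- `Q|_c`: the subsequence of vectors of `Q` defined on channel `c`. -/
def restrictC (Q : Queue) (c : Chan) : Queue :=
  Q.filter (fun v => decide (v.ch = c))

/-- `Q|_l`: the subsequence of vectors of `Q` defined on a channel of level `l`. -/
def restrictL (lvl : Chan → SecLevel) (Q : Queue) (l : SecLevel) : Queue :=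
  Q.filter (fun v => decide (lvl v.ch = l))

/-- Low equality `Q =_L Q'`. -/
def lowEq (lvl : Chan → SecLevel) (Q Q' : Queue) : Prop :=
  restrictL lvl Q SecLevel.L = restrictL lvl Q' SecLevel.L

/-- `dequeue Q c`: the value of the first vector of `Q` defined on channel `c`,
together with the queue obtained by removing that vector (or `none`). -/
def dequeue : Queue → Chan → Option (Val × Queue)
  | [], _ => none
  | v :: Q, c =>
    if v.ch = c then some (v.val, Q)
    else (dequeue Q c).map (fun p => (p.1, v :: p.2))

abbrev Var := String

inductive Expr
  | var (x : Var)
  | const (v : Val)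
deriving DecidableEq

abbrev Mem := Var → Val

def Expr.eval (m : Mem) : Expr → Val
  | .var x => m x
  | .const v => v

/-- The initial memory, mapping every variable to the initial value. -/
def Mem.init : Mem := fun _ => Val.nat 0

/-- The while-language of controlled programs. -/
inductive Prog
  | assign (x : Var) (e : Expr)
  | seq (p q : Prog)
  | ite (e : Expr) (p q : Prog)
  | while (e : Expr) (p : Prog)
  | skip
  | input (x : Var) (c : Chan)
  | output (e : Expr) (c : Chan)
deriving DecidableEq

/-- Configurations of controlled programs. -/
structure PConf where
  prg : Prog
  mem : Mem
  inq : Queue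
  outq : Queue

/-- Small-step semantics of controlled programs. -/
inductive PStep : PConf → PConf → Prop
  | assign : PStep ⟨.assign x e, m, I, O⟩ ⟨.skip, Function.update m x (e.eval m), I, O⟩
  | seqStep : PStep ⟨p, m, I, O⟩ ⟨p', m', I', O'⟩ →
      PStep ⟨.seq p q, m, I, O⟩ ⟨.seq p' q, m', I', O'⟩
  | seqSkip : PStep ⟨.seq .skip q, m, I, O⟩ ⟨q, m, I, O⟩
  | iteT : e.eval m = .bool true → PStep ⟨.ite e p q, m, I, O⟩ ⟨p, m, I, O⟩
  | iteF : e.eval m = .bool false → PStep ⟨.ite e p q, m, I, O⟩ ⟨q, m, I, O⟩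
  | whileT : e.eval m = .bool true →
      PStep ⟨.while e p, m, I, O⟩ ⟨.seq p (.while e p), m, I, O⟩
  | whileF : e.eval m = .bool false → PStep ⟨.while e p, m, I, O⟩ ⟨.skip, m, I, O⟩
  | inp : dequeue I c = some (v, I') →
      PStep ⟨.input x c, m, I, O⟩ ⟨.skip, Function.update m x v, I', O⟩
  | out : PStep ⟨.output e c, m, I, O⟩ ⟨.skip, m, I, O ++ [⟨c, e.eval m⟩]⟩

/-- `π(I) ⇓ O`: the program terminates with the input queue completely consumed
and output queue `O`. -/
def BigStep (p : Prog) (I O : Queue) : Prop :=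
  ∃ m, Relation.ReflTransGen PStep ⟨p, Mem.init, I, []⟩ ⟨.skip, m, [], O⟩

/-- Termination-insensitive non-interference. -/
def TINI (lvl : Chan → SecLevel) (p : Prog) : Prop :=
  ∀ I I' O O', lowEq lvl I I' → BigStep p I O → BigStep p I' O' → lowEq lvl O O'

/-- Termination-sensitive non-interference. -/
def TSNI (lvl : Chan → SecLevel) (p : Prog) : Prop :=
  ∀ I I' O, lowEq lvl I I' → BigStep p I O →
    ∃ O', BigStep p I' O' ∧ lowEq lvl O' O

/-- Removal of inputs, at a fixed choice of the default value. -/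
def RIat (lvl : Chan → SecLevel) (vdef : Val) (p : Prog) : Prop :=
  ∀ I O, BigStep p I O →
    ∃ I' O', lowEq lvl I' I ∧
      (∀ v ∈ I', lvl v.ch = SecLevel.H → v.val = vdef) ∧
      (∀ c, (restrictC I' c).length ≤ (restrictC I c).length) ∧
      BigStep p I' O' ∧ lowEq lvl O' O

/-- Removal of inputs (for every choice of the default value). -/
def RI (lvl : Chan → SecLevel) (p : Prog) : Prop := ∀ vdef, RIat lvl vdef p

/-- Deletion of inputs, at a fixed choice of the default value. -/
def DIat (lvl : Chan → SecLevel) (vdef : Val) (p : Prog) : Prop :=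
  ∀ (I1 : Queue) (v : Vec) (I2 : Queue) (O : Queue), lvl v.ch = SecLevel.H →
    (∀ w ∈ I2, lvl w.ch = SecLevel.H → w.val = vdef) →
    BigStep p (I1 ++ v :: I2) O →
    ∃ I1' I2' O', lowEq lvl (I1' ++ I2') (I1 ++ v :: I2) ∧
      (∀ w ∈ I2', lvl w.ch = SecLevel.H → w.val = vdef) ∧
      BigStep p (I1' ++ I2') O' ∧ lowEq lvl O' O

/-- Deletion of inputs (for every choice of the default value). -/
def DI (lvl : Chan → SecLevel) (p : Prog) : Prop := ∀ vdef, DIat lvl vdef p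

/-! ### The enforcement mechanism -/

/-- Interrupt signals: input request or output request on a channel. -/
inductive Sig
  | inSig (c : Chan)
  | outSig (c : Chan)
deriving DecidableEq

/-- States of a local execution: executing or sleeping. -/
inductive LState
  | E | S
deriving DecidableEq

/-- Configuration of a local execution (with instrumentation recording the
items it has received from MAP and the items it has consumed). -/
structure LocalConf where
  stt : LState
  intr : Option Sig
  prg : Prog
  mem : Mem
  inq : Queue
  outq : Queue
  /-- instrumentation: items delivered by MAP to this local input queue, in order -/
  received : Queue
  /-- instrumentation: items consumed from the local input queue, in order -/
  consumed : Queue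

instance : Inhabited LocalConf :=
  ⟨⟨.E, none, .skip, Mem.init, [], [], [], []⟩⟩

def LocalConf.init (p : Prog) : LocalConf :=
  ⟨.E, none, p, Mem.init, [], [], [], []⟩

/-- Semantics of local executions (rules LINP1, LINP2, LOUTP and the standard
rules, executed only in state `E` with no pending signal). -/
inductive LStep : LocalConf → LocalConf → Prop
  | assign : LStep ⟨.E, none, .assign x e, m, I, O, r, cs⟩
      ⟨.E, none, .skip, Function.update m x (e.eval m), I, O, r, cs⟩
  | seqStep : LStep ⟨.E, none, p, m, I, O, r, cs⟩ ⟨st, sg, p', m', I', O', r', cs'⟩ →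
      LStep ⟨.E, none, .seq p q, m, I, O, r, cs⟩ ⟨st, sg, .seq p' q, m', I', O', r', cs'⟩
  | seqSkip : LStep ⟨.E, none, .seq .skip q, m, I, O, r, cs⟩ ⟨.E, none, q, m, I, O, r, cs⟩
  | iteT : e.eval m = .bool true →
      LStep ⟨.E, none, .ite e p q, m, I, O, r, cs⟩ ⟨.E, none, p, m, I, O, r, cs⟩
  | iteF : e.eval m = .bool false →
      LStep ⟨.E, none, .ite e p q, m, I, O, r, cs⟩ ⟨.E, none, q, m, I, O, r, cs⟩
  | whileT : e.eval m = .bool true →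
      LStep ⟨.E, none, .while e p, m, I, O, r, cs⟩
        ⟨.E, none, .seq p (.while e p), m, I, O, r, cs⟩
  | whileF : e.eval m = .bool false →
      LStep ⟨.E, none, .while e p, m, I, O, r, cs⟩ ⟨.E, none, .skip, m, I, O, r, cs⟩
  | inp1 : dequeue I c = some (v, I') →
      LStep ⟨.E, none, .input x c, m, I, O, r, cs⟩
        ⟨.E, none, .skip, Function.update m x v, I', O, r, cs ++ [⟨c, v⟩]⟩
  | inp2 : dequeue I c = none →
      LStep ⟨.E, none, .input x c, m, I, O, r, cs⟩
        ⟨.S, some (.inSig c), .input x c, m, I, O, r, cs⟩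
  | out : LStep ⟨.E, none, .output e c, m, I, O, r, cs⟩
      ⟨.S, some (.outSig c), .skip, m, I, O ++ [⟨c, e.eval m⟩], r, cs⟩

/-- The three enforcement mechanisms. -/
inductive Mech
  | NI | RI | DI
deriving DecidableEq

/-- Ask privilege of execution `i` on input channel `c`: MAP performs an actual
read of the global input queue for the request `(i, c)`. -/
def canAsk : Mech → (Chan → SecLevel) → ℕ → Chan → Prop
  | .NI, lvl, i, c => (i = 0 ∧ lvl c = .H) ∨ (i = 1 ∧ lvl c = .L)
  | .RI, lvl, i, c => i = 1 ∨ (i = 0 ∧ lvl c = .H)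
  | .DI, lvl, i, c => (i = 0 ∧ lvl c = .H) ∨ (i = 1 ∧ lvl c = .L)

/-- Requests answered by MAP with the default value, without consuming global input. -/
def defaultAnswer : Mech → (Chan → SecLevel) → ℕ → Chan → Prop
  | .NI, lvl, i, c => i = 1 ∧ lvl c = .H
  | .RI, _, _, _ => False
  | .DI, lvl, i, c => 1 ≤ i ∧ lvl c = .H

/-- Requests on which MAP only removes the signal (the requester keeps
sleeping, waiting for the item to be read on behalf of another execution). -/
def skipAnswer : Mech → (Chan → SecLevel) → ℕ → Chan → Prop
  | .NI, lvl, i, c => i = 0 ∧ lvl c = .L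
  | .RI, lvl, i, c => i = 0 ∧ lvl c = .L
  | .DI, lvl, i, c => i ≠ 1 ∧ lvl c = .L

/-- The channel of the first instruction to be executed, if it is an input. -/
def Prog.headInput : Prog → Option (Var × Chan)
  | .input x c => some (x, c)
  | .seq p _ => p.headInput
  | _ => none

/-- Send a vector to the local input queue of a local execution. -/
def sendTo (l : LocalConf) (v : Vec) : LocalConf :=
  { l with inq := l.inq ++ [v], received := l.received ++ [v] }

/-- The channel the local execution is sleeping on (waiting for an input). -/
def LocalConf.waitChanI (l : LocalConf) : Option Chan :=
  if l.stt = LState.S then l.prg.headInput.map Prod.snd else none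

/-- `isReady(c)`: the execution sleeps waiting for an input on `c` and the item is present. -/
def readyOn (l : LocalConf) (c : Chan) : Prop :=
  l.waitChanI = some c ∧ (dequeue l.inq c).isSome = true

instance (l : LocalConf) (c : Chan) : Decidable (readyOn l c) := by
  unfold readyOn; infer_instance

/-- `wake(isReady(c))` applied to a single local execution. -/
def wakeReadyOn (c : Chan) (l : LocalConf) : LocalConf :=
  if readyOn l c then { l with stt := .E, intr := none } else l

/-- `wake(identical(i))` applied to the requester itself. -/
def wakeNow (l : LocalConf) : LocalConf := { l with stt := .E, intr := none }

/-- Distribution of a value read on channel `c`: the high execution (index 0)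
always receives the real value; other executions receive the real value on low
channels and the default value on high channels (the `tell` privilege); then all
executions whose requested input is ready on `c` are woken. -/
def broadcast (lvl : Chan → SecLevel) (vdef : Val) (c : Chan) (v : Val)
    (locs : List LocalConf) : List LocalConf :=
  (locs.mapIdx (fun j l =>
      sendTo l ⟨c, if j = 0 ∨ lvl c = SecLevel.L then v else vdef⟩)).map (wakeReadyOn c)

/-- In the DI mechanism, a high-channel request of the high execution first
clones the configuration of the high execution onto the stack (state `S`). -/
def preClone (M : Mech) (lvl : Chan → SecLevel) (i : ℕ) (c : Chan)
    (locs : List LocalConf) : List LocalConf :=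
  if M = Mech.DI ∧ i = 0 ∧ lvl c = SecLevel.H then
    locs ++ [{ locs.headI with stt := LState.S, intr := none }]
  else locs

/-- Agents performing steps of the enforcement mechanism: a local execution,
MAP activated on an input request, or REDUCE activated on an output request. -/
inductive Agent
  | loc (i : ℕ)
  | mapA (i : ℕ) (c : Chan)
  | redA (i : ℕ) (c : Chan)
deriving DecidableEq

/-- Configuration of the enforcement mechanism (stack of local executions,
global input and output queues, plus instrumentation recording the items
consumed from the global input queue, in order). -/
structure EMConf where
  locs : List LocalConf
  gin : Queue
  gout : Queue
  /-- instrumentation: items consumed from the global input queue, in order -/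
  gconsumed : Queue

def EMConf.locAt (γ : EMConf) (i : ℕ) : LocalConf := γ.locs.getD i default

/-- Semantics of the enforcement mechanism, as the interleaving of atomic steps
of the local executions, of MAP, and of REDUCE.  MAP is activated on an input
interrupt signal; depending on the mechanism and the privilege tables it reads
the global input queue and broadcasts (rule `mapRead`, with cloning for DI),
answers with the default value (rule `mapDefault`), or does nothing beyond
removing the signal (rule `mapSkip`).  REDUCE is activated on an output
interrupt signal; it forwards to the global output queue exactly the high
outputs of the high execution (index 0) and the low outputs of the low
execution (index 1), cleans the local output queue and wakes the requester. -/
inductive EMStep (M : Mech) (lvl : Chan → SecLevel) (vdef : Val) :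
    Agent → EMConf → EMConf → Prop
  | locStep {γ : EMConf} {i : ℕ} {l l' : LocalConf} :
      γ.locs[i]? = some l → LStep l l' →
      EMStep M lvl vdef (.loc i) γ { γ with locs := γ.locs.set i l' }
  | mapRead {γ : EMConf} {i : ℕ} {c : Chan} {l : LocalConf} {v : Val} {gin' : Queue} :
      γ.locs[i]? = some l → l.stt = .S → l.intr = some (.inSig c) →
      canAsk M lvl i c →
      dequeue γ.gin c = some (v, gin') →
      EMStep M lvl vdef (.mapA i c) γ
        { locs := broadcast lvl vdef c v
            (preClone M lvl i c (γ.locs.set i { l with intr := none })),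
          gin := gin', gout := γ.gout, gconsumed := γ.gconsumed ++ [⟨c, v⟩] }
  | mapDefault {γ : EMConf} {i : ℕ} {c : Chan} {l : LocalConf} :
      γ.locs[i]? = some l → l.stt = .S → l.intr = some (.inSig c) →
      defaultAnswer M lvl i c →
      EMStep M lvl vdef (.mapA i c) γ
        { γ with locs := γ.locs.set i (wakeNow (sendTo { l with intr := none } ⟨c, vdef⟩)) }
  | mapSkip {γ : EMConf} {i : ℕ} {c : Chan} {l : LocalConf} :
      γ.locs[i]? = some l → l.stt = .S → l.intr = some (.inSig c) →
      skipAnswer M lvl i c →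
      EMStep M lvl vdef (.mapA i c) γ
        { γ with locs := γ.locs.set i { l with intr := none } }
  | red {γ : EMConf} {i : ℕ} {c : Chan} {l : LocalConf} {v : Val} {out' : Queue} :
      γ.locs[i]? = some l → l.stt = .S → l.intr = some (.outSig c) →
      dequeue l.outq c = some (v, out') →
      EMStep M lvl vdef (.redA i c) γ
        { γ with
          locs := γ.locs.set i { l with stt := .E, intr := none, outq := out' },
          gout := γ.gout ++
            (if (i = 0 ∧ lvl c = SecLevel.H) ∨ (i = 1 ∧ lvl c = SecLevel.L)
             then [⟨c, v⟩] else []) }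

/-- A step of the enforcement mechanism, by any agent. -/
def EMStepRel (M : Mech) (lvl : Chan → SecLevel) (vdef : Val) :
    EMConf → EMConf → Prop :=
  fun γ γ' => ∃ a, EMStep M lvl vdef a γ γ'

/-- Initial configuration: the high execution π[0] and the low execution π[1],
global input queue `I`, empty global output queue. -/
def EMConf.init (p : Prog) (I : Queue) : EMConf :=
  ⟨[LocalConf.init p, LocalConf.init p], I, [], []⟩

/-- The enforcement mechanism has terminated: all local executions (as well as
the MAP and REDUCE programs, which are collapsed into atomic steps here) are
terminated and the global input queue has been consumed completely. -/
def EMConf.Terminal (γ : EMConf) : Prop :=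
  (∀ l ∈ γ.locs, l.prg = Prog.skip) ∧ γ.gin = []

/-- `EM(π)(I) ⇓ O`. -/
def EMBigStep (M : Mech) (lvl : Chan → SecLevel) (vdef : Val)
    (p : Prog) (I O : Queue) : Prop :=
  ∃ γ, Relation.ReflTransGen (EMStepRel M lvl vdef) (EMConf.init p I) γ ∧
    γ.Terminal ∧ γ.gout = O

/-- Reachable configurations of `EM(π)` on global input `I`. -/
def EMReach (M : Mech) (lvl : Chan → SecLevel) (vdef : Val)
    (p : Prog) (I : Queue) (γ : EMConf) : Prop :=
  Relation.ReflTransGen (EMStepRel M lvl vdef) (EMConf.init p I) γ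

/-- A configuration from which no step is possible. -/
def EMStuck (M : Mech) (lvl : Chan → SecLevel) (vdef : Val) (γ : EMConf) : Prop :=
  ∀ a γ', ¬ EMStep M lvl vdef a γ γ'

/-- There is no infinite run of the enforcement mechanism from `γ0`
(termination under every scheduling of the local executions). -/
def NoInfiniteRun (M : Mech) (lvl : Chan → SecLevel) (vdef : Val) (γ0 : EMConf) : Prop :=
  ¬ ∃ f : ℕ → EMConf, f 0 = γ0 ∧ ∀ n, EMStepRel M lvl vdef (f n) (f (n + 1))

end MapReduce

namespace MapReduce

/-! Only rule `mapRead` changes the global input queue, and it fires only when the requester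
has the ask privilege, which determines the requester on low channels (and, under NI and DI,
on high channels). A local execution receives items only from the broadcast of `mapRead`,
which sends the real value to π[0] and on low channels and the default value otherwise, or
from `mapDefault`, which answers only high-channel requests of executions other than π[0].
Reachable configurations always contain π[0] and π[1], so a DI clone, appended at the end of
the stack, never lands at index 1. -/

lemma LStep.received_eq {l l' : LocalConf} (h : LStep l l') : l'.received = l.received := by
  induction h <;> simp_all

lemma length_broadcast (lvl : Chan → SecLevel) (vdef : Val) (c : Chan) (v : Val)
    (L : List LocalConf) : (broadcast lvl vdef c v L).length = L.length := by
  simp [broadcast]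

lemma length_le_length_preClone (M : Mech) (lvl : Chan → SecLevel) (i : ℕ) (c : Chan)
    (L : List LocalConf) : L.length ≤ (preClone M lvl i c L).length := by
  unfold preClone; split <;> simp

lemma getD_preClone {M : Mech} {lvl : Chan → SecLevel} {i : ℕ} {c : Chan}
    {L : List LocalConf} {j : ℕ} (hj : j < L.length) :
    (preClone M lvl i c L).getD j default = L.getD j default := by
  unfold preClone; split
  · simp [List.getD_eq_getElem?_getD, List.getElem?_append_left hj]
  · rfl

lemma received_wakeReadyOn (c : Chan) (l : LocalConf) :
    (wakeReadyOn c l).received = l.received := by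
  unfold wakeReadyOn; split <;> rfl

lemma received_getD_broadcast {lvl : Chan → SecLevel} {vdef : Val} {c : Chan} {v : Val}
    {L : List LocalConf} {j : ℕ} (hj : j < L.length) :
    ((broadcast lvl vdef c v L).getD j default).received =
      (L.getD j default).received ++ [⟨c, if j = 0 ∨ lvl c = SecLevel.L then v else vdef⟩] := by
  have hj' : j < (broadcast lvl vdef c v L).length := by rwa [length_broadcast]
  rw [List.getD_eq_getElem _ _ hj', List.getD_eq_getElem _ _ hj]
  simp [broadcast, received_wakeReadyOn, sendTo]

lemma received_getD_set {L : List LocalConf} {i : ℕ} {l x : LocalConf}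
    (hL : L[i]? = some l) (hx : x.received = l.received) (j : ℕ) :
    ((L.set i x).getD j default).received = (L.getD j default).received := by
  rw [List.getD_eq_getElem?_getD, List.getD_eq_getElem?_getD, List.getElem?_set]
  split
  · subst_vars
    obtain ⟨hi, rfl⟩ := List.getElem?_eq_some_iff.mp hL
    simp [hi, hx]
  · rfl

lemma canAsk.eq_one_of_eq_L {M : Mech} {lvl : Chan → SecLevel} {i : ℕ} {c : Chan}
    (h : canAsk M lvl i c) (hc : lvl c = .L) : i = 1 := by
  cases M <;> simp [canAsk, hc] at h <;> tauto

lemma canAsk.eq_zero_of_eq_H {M : Mech} {lvl : Chan → SecLevel} {i : ℕ} {c : Chan}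
    (h : canAsk M lvl i c) (hM : M = .NI ∨ M = .DI) (hc : lvl c = .H) : i = 0 := by
  rcases hM with rfl | rfl <;> simp [canAsk, hc] at h <;> exact h

lemma defaultAnswer.ne_zero_and_eq_H {M : Mech} {lvl : Chan → SecLevel} {i : ℕ} {c : Chan}
    (h : defaultAnswer M lvl i c) : i ≠ 0 ∧ lvl c = .H := by
  cases M <;> simp only [defaultAnswer] at h <;> exact ⟨by omega, h.2⟩

section Step

variable {M : Mech} {lvl : Chan → SecLevel} {vdef : Val} {a : Agent} {γ γ' : EMConf}

lemma EMStep.length_locs_le (h : EMStep M lvl vdef a γ γ') :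
    γ.locs.length ≤ γ'.locs.length := by
  cases h with
  | @mapRead _ i c l =>
    simpa [length_broadcast] using
      length_le_length_preClone M lvl i c (γ.locs.set i { l with intr := none })
  | _ => simp

lemma EMReach.two_le_length_locs {p : Prog} {I : Queue} (h : EMReach M lvl vdef p I γ) :
    2 ≤ γ.locs.length := by
  induction h with
  | refl => simp [EMConf.init]
  | tail _ hstep ih => exact ih.trans hstep.choose_spec.length_locs_le

lemma EMStep.exists_mapRead_of_gin_ne (h : EMStep M lvl vdef a γ γ') (hgin : γ'.gin ≠ γ.gin) :
    ∃ i c v, a = .mapA i c ∧ canAsk M lvl i c ∧ dequeue γ.gin c = some (v, γ'.gin) := by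
  cases h with
  | mapRead _ _ _ hask hdq => exact ⟨_, _, _, rfl, hask, hdq⟩
  | _ => exact absurd rfl hgin

lemma EMStep.exists_dequeue_of_mapA_RI {i : ℕ} {c : Chan}
    (h : EMStep .RI lvl vdef (.mapA i c) γ γ') (hc : lvl c = .H) :
    ∃ v, dequeue γ.gin c = some (v, γ'.gin) := by
  cases h with
  | mapRead _ _ _ _ hdq => exact ⟨_, hdq⟩
  | mapDefault _ _ _ hda => exact hda.elim
  | mapSkip _ _ _ hsa => simp [skipAnswer, hc] at hsa

theorem EMStep.exists_received_eq_append (h : EMStep M lvl vdef a γ γ') {j : ℕ}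
    (hj : j < γ.locs.length) :
    ∃ D, (γ'.locAt j).received = (γ.locAt j).received ++ D ∧
      ∀ w ∈ D, (j = 0 ∨ lvl w.ch = .L → dequeue γ.gin w.ch = some (w.val, γ'.gin)) ∧
        (j ≠ 0 → lvl w.ch = .H → w.val = vdef) := by
  cases h with
  | locStep hL hstep =>
    exact ⟨[], by simpa [EMConf.locAt] using received_getD_set hL hstep.received_eq j, by simp⟩
  | @mapRead _ i c l v _ hL _ _ _ hdq =>
    refine ⟨[⟨c, if j = 0 ∨ lvl c = .L then v else vdef⟩], ?_, ?_⟩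
    · simp only [EMConf.locAt]
      have hj' : j < (γ.locs.set i { l with intr := none }).length := by simpa using hj
      rw [received_getD_broadcast (hj'.trans_le (length_le_length_preClone ..)),
        getD_preClone hj', received_getD_set (x := { l with intr := none }) hL rfl]
    · simp only [List.mem_singleton, forall_eq]
      split_ifs with hreal
      · exact ⟨fun _ => hdq, fun hj hc => by simp [hj, hc] at hreal⟩
      · exact ⟨fun h => absurd h hreal, fun _ _ => rfl⟩
  | @mapDefault _ i c l hL _ _ hda =>
    obtain ⟨hi0, hcH⟩ := hda.ne_zero_and_eq_H
    by_cases hji : j = i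
    · subst hji
      obtain ⟨-, rfl⟩ := List.getElem?_eq_some_iff.mp hL
      refine ⟨[⟨c, vdef⟩], ?_, by simp [hi0, hcH]⟩
      simp [EMConf.locAt, hj, wakeNow, sendTo]
    · refine ⟨[], ?_, by simp⟩
      simp [EMConf.locAt, List.getD_eq_getElem?_getD, List.getElem?_set_ne (Ne.symm hji)]
  | @mapSkip _ _ _ l hL =>
    refine ⟨[], ?_, by simp⟩
    simpa [EMConf.locAt] using received_getD_set (x := { l with intr := none }) hL rfl j
  | @red _ _ _ l _ out' hL =>
    refine ⟨[], ?_, by simp⟩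
    simpa [EMConf.locAt] using
      received_getD_set (x := { l with stt := .E, intr := none, outq := out' }) hL rfl j

end Step

/-- **Input items consumed by the enforcement mechanisms (Proposition 1).**
In every reachable configuration of the enforcement mechanisms for NI, RI and
DI, for every step:
(i) MAP consumes a low input item from the global input queue only upon a
low-channel request from the low execution (and, for NI and DI, a high input
item only upon a high-channel request from the high execution), and every
consumption is performed by MAP;
(ii) for RI, MAP consumes a high input item from the global input queue upon a
high-channel request from any local execution;
(iii) the low execution receives the default value for every high input item
and the real value (the value just read from the global input queue) for every
low input item;
(iv) the high execution receives real values for both low and high input items. -/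
theorem prop_input_consumption (lvl : Chan → SecLevel) (vdef : Val) (p : Prog)
    (I : Queue) (M : Mech) (γ : EMConf) (hreach : EMReach M lvl vdef p I γ)
    (a : Agent) (γ' : EMConf) (hstep : EMStep M lvl vdef a γ γ') :
    -- (i) every consumption of a global input item is a MAP step, on a
    -- low-channel request from the low execution when the item is low, and
    -- (for NI and DI) on a high-channel request from the high execution when
    -- the item is high
    (γ'.gin ≠ γ.gin →
      ∃ i c v, a = Agent.mapA i c ∧ dequeue γ.gin c = some (v, γ'.gin) ∧
        (lvl c = SecLevel.L → i = 1) ∧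
        ((M = Mech.NI ∨ M = Mech.DI) → lvl c = SecLevel.H → i = 0)) ∧
    -- (ii) for RI, MAP consumes a high input item for a high-channel request
    -- from any local execution
    (M = Mech.RI → ∀ i c, a = Agent.mapA i c → lvl c = SecLevel.H →
      ∃ v gin', dequeue γ.gin c = some (v, gin') ∧ γ'.gin = gin') ∧
    -- (iii) items received by the low execution: default values on high
    -- channels, real values on low channels
    (∃ D, (γ'.locAt 1).received = (γ.locAt 1).received ++ D ∧
      ∀ w ∈ D, (lvl w.ch = SecLevel.H → w.val = vdef) ∧
        (lvl w.ch = SecLevel.L → dequeue γ.gin w.ch = some (w.val, γ'.gin))) ∧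
    -- (iv) items received by the high execution: always the real value
    (∃ D, (γ'.locAt 0).received = (γ.locAt 0).received ++ D ∧
      ∀ w ∈ D, dequeue γ.gin w.ch = some (w.val, γ'.gin)) := by
  have hlen := hreach.two_le_length_locs
  obtain ⟨D₁, hD₁, hlow⟩ := hstep.exists_received_eq_append (j := 1) (by omega)
  obtain ⟨D₀, hD₀, hhigh⟩ := hstep.exists_received_eq_append (j := 0) (by omega)
  refine ⟨fun hgin => ?_, ?_, ⟨D₁, hD₁, fun w hw => ?_⟩, ⟨D₀, hD₀, fun w hw => ?_⟩⟩
  · obtain ⟨i, c, v, rfl, hask, hdq⟩ := hstep.exists_mapRead_of_gin_ne hgin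
    exact ⟨i, c, v, rfl, hdq, hask.eq_one_of_eq_L, hask.eq_zero_of_eq_H⟩
  · rintro rfl i c rfl hc
    obtain ⟨v, hdq⟩ := hstep.exists_dequeue_of_mapA_RI hc
    exact ⟨v, _, hdq, rfl⟩
  · exact ⟨(hlow w hw).2 one_ne_zero, fun hc => (hlow w hw).1 (.inr hc)⟩
  · exact (hhigh w hw).1 (.inl rfl)

end MapReduce
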